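/- Correctness of the linear-time provability procedure: for polarized multiplicative-additive formulas, the recursively-defined Boolean evaluation ‖·‖_o, ‖·‖_p agrees with strategy existence, i.e., ‖O‖_o = true iff the opponent game denoted by O has a strategy, and ‖P‖_p = true iff the player game denoted by P has a strategy, where the evaluation satisfies: ‖P ⅋ P'‖_p = ‖P‖_p ∨ ‖P'‖_p; ‖O ⊗ʳ P‖_p = ‖O‖_o ∧ ‖P‖_p; ‖dual(O)‖_p = ¬‖O‖_o; ‖{O_i}‖_p = ⋁ ‖O_i‖_o; ‖O ⊗ O'‖_o = ‖O‖_o ∧ ‖O'‖_o; ‖P ⅋ʳ O‖_o = ‖O‖_o ∨ ‖P‖_p; ‖dual(P)‖_o = ¬‖P‖_p; ‖(P_j)‖_o = ⋀ ‖P_j‖_p. -/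

import Mathlib

/-- Rose trees: the unlabeled shape of a game tree. -/
inductive RTree : Type where
  | node : List RTree → RTree

mutual
/-- An opponent game: a finite list of player games (its children). -/
inductive OGame : Type where
  | mk : List PGame → OGame
/-- A player game: a finite list of opponent games (its children). -/
inductive PGame : Type where
  | mk : List OGame → PGame
end

mutual
/-- The dual of an opponent game. -/
def OGame.dual : OGame → PGame
  | .mk ps => .mk (ps.attach.map fun ⟨p, _⟩ => p.dual)
/-- The dual of a player game. -/
def PGame.dual : PGame → OGame
  | .mk os => .mk (os.attach.map fun ⟨o, _⟩ => o.dual)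
end

mutual
/-- Strategy existence in an opponent game: a conjunction over children. -/
def OGame.strat : OGame → Bool
  | .mk ps => ps.attach.all fun ⟨p, _⟩ => p.strat
/-- Strategy existence in a player game: a disjunction over children. -/
def PGame.strat : PGame → Bool
  | .mk os => os.attach.any fun ⟨o, _⟩ => o.strat
end

mutual
/-- Tensor of opponent games: `O ⊗ O' = (P_i ⊗ˡ O', O ⊗ʳ P'_k | …)`. -/
def otimes : OGame → OGame → OGame
  | .mk ps, .mk qs => .mk ((ps.attach.map fun ⟨p, _⟩ => oxl p (.mk qs)) ++
      (qs.attach.map fun ⟨q, _⟩ => oxr (.mk ps) q))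
  termination_by o o' => sizeOf o + sizeOf o'
  decreasing_by
  · have := List.sizeOf_lt_of_mem ‹p ∈ ps›; simp_all; omega
  · have := List.sizeOf_lt_of_mem ‹q ∈ qs›; simp_all; omega
/-- Mixed tensor `O ⊗ʳ P = {O ⊗ O_j | j ∈ J}`. -/
def oxr : OGame → PGame → PGame
  | o, .mk os => .mk (os.attach.map fun ⟨oj, _⟩ => otimes o oj)
  termination_by o p => sizeOf o + sizeOf p
  decreasing_by
  · have := List.sizeOf_lt_of_mem ‹oj ∈ os›; simp_all; omega
/-- Mixed tensor `P ⊗ˡ O = {O_j ⊗ O | j ∈ J}`. -/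
def oxl : PGame → OGame → PGame
  | .mk os, o => .mk (os.attach.map fun ⟨oj, _⟩ => otimes oj o)
  termination_by p o => sizeOf p + sizeOf o
  decreasing_by
  · have := List.sizeOf_lt_of_mem ‹oj ∈ os›; simp_all; omega
end

mutual
/-- Par of player games: `P ⅋ P' = {O_j ⅋ˡ P', P ⅋ʳ O'_k | …}`. -/
def parr : PGame → PGame → PGame
  | .mk os, .mk qs => .mk ((os.attach.map fun ⟨o, _⟩ => parrOP o (.mk qs)) ++
      (qs.attach.map fun ⟨q, _⟩ => parrPO (.mk os) q))
  termination_by p p' => sizeOf p + sizeOf p'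
  decreasing_by
  · have := List.sizeOf_lt_of_mem ‹o ∈ os›; simp_all; omega
  · have := List.sizeOf_lt_of_mem ‹q ∈ qs›; simp_all; omega
/-- Mixed par `P ⅋ʳ O = (P ⅋ P_i | i ∈ I)`. -/
def parrPO : PGame → OGame → OGame
  | p, .mk ps => .mk (ps.attach.map fun ⟨pi, _⟩ => parr p pi)
  termination_by p o => sizeOf p + sizeOf o
  decreasing_by
  · have := List.sizeOf_lt_of_mem ‹pi ∈ ps›; simp_all; omega
/-- Mixed par `O ⅋ˡ P = (P_i ⅋ P | i ∈ I)`. -/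
def parrOP : OGame → PGame → OGame
  | .mk ps, p => .mk (ps.attach.map fun ⟨pi, _⟩ => parr pi p)
  termination_by o p => sizeOf o + sizeOf p
  decreasing_by
  · have := List.sizeOf_lt_of_mem ‹pi ∈ ps›; simp_all; omega
end

mutual
/-- The exponential `!O`: `!() = ()` and `!O = ⊗_{i∈I} (b_i : !'P_i)` for `I ≠ ∅`. -/
def bang : OGame → OGame
  | .mk [] => .mk []
  | .mk (p :: ps) =>
      (ps.attach.map fun ⟨q, _⟩ => OGame.mk [bang' q]).foldl otimes (OGame.mk [bang' p])
/-- The auxiliary exponential `!'{a_j : O_j} = {a_j : !O_j}`. -/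
def bang' : PGame → PGame
  | .mk os => .mk (os.attach.map fun ⟨o, _⟩ => bang o)
end

mutual
/-- Underlying unlabeled tree of an opponent game. -/
def OGame.toTree : OGame → RTree
  | .mk ps => .node (ps.attach.map fun ⟨p, _⟩ => p.toTree)
/-- Underlying unlabeled tree of a player game. -/
def PGame.toTree : PGame → RTree
  | .mk os => .node (os.attach.map fun ⟨o, _⟩ => o.toTree)
end

/-- Number of nodes (including the root). -/
def RTree.nodes : RTree → ℕ
  | .node cs => 1 + (cs.attach.map fun ⟨c, _⟩ => c.nodes).sum

/-- Number of parent-child edges. -/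
def RTree.edges : RTree → ℕ
  | .node cs => cs.length + (cs.attach.map fun ⟨c, _⟩ => c.edges).sum

/-- Number of leaves. -/
def RTree.leaves : RTree → ℕ
  | .node [] => 1
  | .node cs => (cs.attach.map fun ⟨c, _⟩ => c.leaves).sum

/-- Uniform size: `u[leaf] = 0`, `u[node with n children] = (n-1) + Σ u[child]`. -/
def RTree.usize : RTree → ℕ
  | .node [] => 0
  | .node cs => (cs.length - 1) + (cs.attach.map fun ⟨c, _⟩ => c.usize).sum

/-- Depth: leaves have depth 0. -/
def RTree.depth : RTree → ℕ
  | .node cs => (cs.attach.map fun ⟨c, _⟩ => c.depth + 1).foldr max 0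

/-- `profile t k` is the number of nodes of `t` at depth `k`. -/
def RTree.profile : RTree → ℕ → ℕ
  | _, 0 => 1
  | .node cs, k + 1 => (cs.attach.map fun ⟨c, _⟩ => c.profile k).sum

mutual
/-- Number of player nodes of an opponent game. -/
def OGame.pnodes : OGame → ℕ
  | .mk ps => (ps.attach.map fun ⟨p, _⟩ => p.pnodes).sum
/-- Number of player nodes of a player game (the root counts). -/
def PGame.pnodes : PGame → ℕ
  | .mk os => 1 + (os.attach.map fun ⟨o, _⟩ => o.pnodes).sum
end

mutual
/-- Number of edges leaving opponent nodes, for an opponent game. -/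
def OGame.eo : OGame → ℕ
  | .mk ps => ps.length + (ps.attach.map fun ⟨p, _⟩ => p.eo).sum
/-- Number of edges leaving opponent nodes, for a player game. -/
def PGame.eo : PGame → ℕ
  | .mk os => (os.attach.map fun ⟨o, _⟩ => o.eo).sum
end

mutual
/-- Number of edges leaving player nodes, for an opponent game. -/
def OGame.ep : OGame → ℕ
  | .mk ps => (ps.attach.map fun ⟨p, _⟩ => p.ep).sum
/-- Number of edges leaving player nodes, for a player game. -/
def PGame.ep : PGame → ℕ
  | .mk os => os.length + (os.attach.map fun ⟨o, _⟩ => o.ep).sum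
end

/-- `γ(i,j) = 1` if `i` or `j` is zero or even, else `0`. -/
def gammaCoef (i j : ℕ) : ℕ :=
  if i = 0 ∨ j = 0 ∨ i % 2 = 0 ∨ j % 2 = 0 then 1 else 0

mutual
/-- The single-branch player chain `L_n`. -/
def Lp : ℕ → PGame
  | 0 => .mk []
  | n + 1 => .mk [Lo n]
/-- The single-branch opponent chain `L'_n`. -/
def Lo : ℕ → OGame
  | 0 => .mk []
  | n + 1 => .mk [Lp n]
end

/-!
Every connective is defined by recursion on the children of its arguments, and `strat` is a
conjunction (opponent) or disjunction (player) over children, so all the identities follow by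
simultaneous well-founded induction: after unfolding one layer, the induction hypotheses turn
each identity into Boolean algebra over lists. The only non-uniform case is a tensor (dually, a
par) with an empty side: its cross terms disappear, but an opponent game without moves has a
strategy vacuously, so the identity still holds.
-/

namespace List

variable {α β : Type*} {l : List α} {f : α → β} {p : β → Bool} {q : α → Bool}

theorem any_map_of_forall_mem (h : ∀ x ∈ l, p (f x) = q x) : (l.map f).any p = l.any q := by
  induction l <;> simp_all

theorem all_map_of_forall_mem (h : ∀ x ∈ l, p (f x) = q x) : (l.map f).all p = l.all q := by
  induction l <;> simp_all

theorem any_const_and (c : Bool) : (l.any fun x => c && q x) = (c && l.any q) := by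
  cases c <;> simp

theorem all_const_or (c : Bool) : (l.all fun x => c || q x) = (c || l.all q) := by
  cases c <;> simp

theorem all_const_and (c : Bool) :
    (l.all fun x => c && q x) = (l.all q && (l.isEmpty || c)) := by
  cases c <;> cases l <;> simp

theorem any_or_const (c : Bool) :
    (l.any fun x => q x || c) = (l.any q || (!l.isEmpty && c)) := by
  cases c <;> cases l <;> simp

end List

theorem OGame.strat_mk (ps : List PGame) : (OGame.mk ps).strat = ps.all PGame.strat := by
  simp [OGame.strat]

theorem PGame.strat_mk (os : List OGame) : (PGame.mk os).strat = os.any OGame.strat := by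
  simp [PGame.strat]

theorem OGame.dual_mk (ps : List PGame) : (OGame.mk ps).dual = .mk (ps.map PGame.dual) := by
  simp only [OGame.dual, List.map_subtype, List.unattach_attach]

theorem PGame.dual_mk (os : List OGame) : (PGame.mk os).dual = .mk (os.map OGame.dual) := by
  simp only [PGame.dual, List.map_subtype, List.unattach_attach]

theorem otimes_mk_mk (ps qs : List PGame) :
    otimes (.mk ps) (.mk qs) = .mk (ps.map (oxl · (.mk qs)) ++ qs.map (oxr (.mk ps))) := by
  simp only [otimes, List.map_subtype, List.unattach_attach]

theorem oxr_mk (O : OGame) (os : List OGame) : oxr O (.mk os) = .mk (os.map (otimes O)) := by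
  simp only [oxr, List.map_subtype, List.unattach_attach]

theorem oxl_mk (os : List OGame) (O : OGame) : oxl (.mk os) O = .mk (os.map (otimes · O)) := by
  simp only [oxl, List.map_subtype, List.unattach_attach]

theorem parr_mk_mk (os qs : List OGame) :
    parr (.mk os) (.mk qs) = .mk (os.map (parrOP · (.mk qs)) ++ qs.map (parrPO (.mk os))) := by
  simp only [parr, List.map_subtype, List.unattach_attach]

theorem parrPO_mk (P : PGame) (ps : List PGame) : parrPO P (.mk ps) = .mk (ps.map (parr P)) := by
  simp only [parrPO, List.map_subtype, List.unattach_attach]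

theorem parrOP_mk (ps : List PGame) (P : PGame) : parrOP (.mk ps) P = .mk (ps.map (parr · P)) := by
  simp only [parrOP, List.map_subtype, List.unattach_attach]

mutual
theorem OGame.strat_dual : ∀ O : OGame, O.dual.strat = !O.strat
  | .mk ps => by
    have ih : ∀ p ∈ ps, p.dual.strat = !p.strat := fun p _ => PGame.strat_dual p
    rw [OGame.dual_mk, PGame.strat_mk, List.any_map_of_forall_mem ih, OGame.strat_mk,
      List.not_all_eq_any_not]
theorem PGame.strat_dual : ∀ P : PGame, P.dual.strat = !P.strat
  | .mk os => by
    have ih : ∀ o ∈ os, o.dual.strat = !o.strat := fun o _ => OGame.strat_dual o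
    rw [PGame.dual_mk, OGame.strat_mk, List.all_map_of_forall_mem ih, PGame.strat_mk,
      List.not_any_eq_all_not]
end

mutual
theorem OGame.strat_otimes : ∀ O O' : OGame, (otimes O O').strat = (O.strat && O'.strat)
  | .mk ps, .mk qs => by
    have ihl : ∀ p ∈ ps, (oxl p (.mk qs)).strat = ((OGame.mk qs).strat && p.strat) :=
      fun p _ => PGame.strat_oxl p _
    have ihr : ∀ q ∈ qs, (oxr (.mk ps) q).strat = ((OGame.mk ps).strat && q.strat) :=
      fun q _ => PGame.strat_oxr _ q
    rw [otimes_mk_mk, OGame.strat_mk, List.all_append, List.all_map_of_forall_mem ihl,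
      List.all_map_of_forall_mem ihr, List.all_const_and, List.all_const_and, OGame.strat_mk,
      OGame.strat_mk]
    cases ps.all PGame.strat <;> cases qs.all PGame.strat <;> simp
theorem PGame.strat_oxr : ∀ (O : OGame) (P : PGame), (oxr O P).strat = (O.strat && P.strat)
  | O, .mk os => by
    have ih : ∀ o ∈ os, (otimes O o).strat = (O.strat && o.strat) :=
      fun o _ => OGame.strat_otimes O o
    rw [oxr_mk, PGame.strat_mk, List.any_map_of_forall_mem ih, List.any_const_and,
      PGame.strat_mk]
theorem PGame.strat_oxl : ∀ (P : PGame) (O : OGame), (oxl P O).strat = (O.strat && P.strat)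
  | .mk os, O => by
    have ih : ∀ o ∈ os, (otimes o O).strat = (O.strat && o.strat) :=
      fun o _ => (OGame.strat_otimes o O).trans (Bool.and_comm ..)
    rw [oxl_mk, PGame.strat_mk, List.any_map_of_forall_mem ih, List.any_const_and,
      PGame.strat_mk]
end

mutual
theorem PGame.strat_parr : ∀ P P' : PGame, (parr P P').strat = (P.strat || P'.strat)
  | .mk os, .mk qs => by
    have ihl : ∀ o ∈ os, (parrOP o (.mk qs)).strat = (o.strat || (PGame.mk qs).strat) :=
      fun o _ => OGame.strat_parrOP o _
    have ihr : ∀ q ∈ qs, (parrPO (.mk os) q).strat = (q.strat || (PGame.mk os).strat) :=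
      fun q _ => OGame.strat_parrPO _ q
    rw [parr_mk_mk, PGame.strat_mk, List.any_append, List.any_map_of_forall_mem ihl,
      List.any_map_of_forall_mem ihr, List.any_or_const, List.any_or_const, PGame.strat_mk,
      PGame.strat_mk]
    cases os.any OGame.strat <;> cases qs.any OGame.strat <;> simp
theorem OGame.strat_parrPO :
    ∀ (P : PGame) (O : OGame), (parrPO P O).strat = (O.strat || P.strat)
  | P, .mk ps => by
    have ih : ∀ p ∈ ps, (parr P p).strat = (P.strat || p.strat) :=
      fun p _ => PGame.strat_parr P p
    rw [parrPO_mk, OGame.strat_mk, List.all_map_of_forall_mem ih, List.all_const_or,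
      OGame.strat_mk, Bool.or_comm]
theorem OGame.strat_parrOP :
    ∀ (O : OGame) (P : PGame), (parrOP O P).strat = (O.strat || P.strat)
  | .mk ps, P => by
    have ih : ∀ p ∈ ps, (parr p P).strat = (P.strat || p.strat) :=
      fun p _ => (PGame.strat_parr p P).trans (Bool.or_comm ..)
    rw [parrOP_mk, OGame.strat_mk, List.all_map_of_forall_mem ih, List.all_const_or,
      OGame.strat_mk, Bool.or_comm]
end

/-- correctness of the linear-time provability procedure:
strategy existence commutes with all the connectives as stated. -/
theorem linear_provability_correct :
    (∀ P P' : PGame, (parr P P').strat = (P.strat || P'.strat)) ∧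
    (∀ (O : OGame) (P : PGame), (oxr O P).strat = (O.strat && P.strat)) ∧
    (∀ (P : PGame) (O : OGame), (oxl P O).strat = (O.strat && P.strat)) ∧
    (∀ O : OGame, O.dual.strat = !O.strat) ∧
    (∀ os : List OGame, (PGame.mk os).strat = os.any OGame.strat) ∧
    (∀ O O' : OGame, (otimes O O').strat = (O.strat && O'.strat)) ∧
    (∀ (P : PGame) (O : OGame), (parrPO P O).strat = (O.strat || P.strat)) ∧
    (∀ (O : OGame) (P : PGame), (parrOP O P).strat = (O.strat || P.strat)) ∧
    (∀ P : PGame, P.dual.strat = !P.strat) ∧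
    (∀ ps : List PGame, (OGame.mk ps).strat = ps.all PGame.strat) :=
  ⟨PGame.strat_parr, PGame.strat_oxr, PGame.strat_oxl, OGame.strat_dual, PGame.strat_mk,
    OGame.strat_otimes, OGame.strat_parrPO, OGame.strat_parrOP, PGame.strat_dual, OGame.strat_mk⟩
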